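/- arXiv:2212.08719 — 8 statements merged into one kernel-verified Lean document; each statement's English description precedes it below -/
import Mathlib

section
/- Let T_n (for n ≥ 1) be the group of permutations σ of the positive integers with σ(k) = k for all k > n. Then: (i) for all n_1, …, n_k ≥ 1 the setwise product T_{n_1}·T_{n_2}⋯T_{n_k} equals T_{max(n_1,…,n_k)}; consequently, for every permutation m of {1,…,k} and every x ∈ 𝔅, x T_{n_1}⋯T_{n_k} = x T_{n_{m_1}}⋯T_{n_{m_k}}, i.e. (𝔅,(T_n : n ≥ 1)) is a pseudo-multi-transformation group; and (ii) there exist σ ∈ T_2 and μ ∈ T_3 (namely the transpositions (1 2) and (1 3)) with 1·f_σ·f_μ ≠ 1·f_μ·f_σ, so (𝔅,(T_n : n ≥ 1)) is not a multi-transformation group. -/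
open Pointwise Classical

/-- 𝔅 = {0} ∪ {1/n : n a positive integer} as a subspace of ℝ. -/
def Bset : Set ℝ := {x | x = 0 ∨ ∃ n : ℕ+, x = 1 / ((n : ℕ) : ℝ)}

/-- The homeomorphism `f_σ` of `𝔅` induced by a permutation `σ` of the positive
integers: `(1/k) f_σ = 1/σ(k)` and `0 f_σ = 0`. -/
noncomputable def fPerm (σ : Equiv.Perm ℕ+) (x : Bset) : Bset :=
  if h : ∃ n : ℕ+, (x : ℝ) = 1 / ((n : ℕ) : ℝ) then
    ⟨1 / (((σ h.choose : ℕ+) : ℕ) : ℝ), Or.inr ⟨σ h.choose, rfl⟩⟩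
  else ⟨0, Or.inl rfl⟩

/-- The pair `(x, y)` is proximal for the set `S` of self-maps of `X`. -/
def IsProximal {X : Type*} [TopologicalSpace X] (S : Set (X → X)) (x y : X) : Prop :=
  ∃ z : X, (z, z) ∈ closure {p : X × X | ∃ f ∈ S, p = (f x, f y)}

/-- The action of the set `S` of self-maps of `X` is distal. -/
def IsDistalAction {X : Type*} [TopologicalSpace X] (S : Set (X → X)) : Prop :=
  ∀ x y : X, IsProximal S x y → x = y

/-- The set of self-maps of `𝔅` induced by a set of permutations. -/
noncomputable def permAct (S : Set (Equiv.Perm ℕ+)) : Set (Bset → Bset) :=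
  {f | ∃ σ ∈ S, f = fPerm σ}

/-- The orbit `xS` of a point of `𝔅`. -/
def pointOrbit (x : Bset) (S : Set (Equiv.Perm ℕ+)) : Set Bset :=
  {y | ∃ σ ∈ S, y = fPerm σ x}

/-- `P S = {x σ : x ∈ P, σ ∈ S}`, the action of a set of permutations on a set of points. -/
def actSet (P : Set Bset) (S : Set (Equiv.Perm ℕ+)) : Set Bset :=
  {y | ∃ x ∈ P, ∃ σ ∈ S, y = fPerm σ x}

/-- `T_n`: permutations fixing every `k > n`. -/
def TnSet (n : ℕ+) : Set (Equiv.Perm ℕ+) := {σ | ∀ k : ℕ+, n < k → σ k = k}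

/-- `T`: the finitary permutations of the positive integers. -/
def Tfin : Set (Equiv.Perm ℕ+) := {σ | ∃ n : ℕ+, ∀ k : ℕ+, n < k → σ k = k}

noncomputable def onePt : Bset := ⟨1, Or.inr ⟨1, by norm_num⟩⟩
def zeroPt : Bset := ⟨0, Or.inl rfl⟩

/-!
Each `T_n` is the pointwise stabiliser of `{k | n < k}`, so the `T_n` form an increasing chain
of subgroups. A product `H K` of two subgroups with `H ≤ K` or `K ≤ H` is the larger one, hence
`T_a T_b = T_{max a b}`; in particular the `T_n` commute setwise. As `σ ↦ f_σ` is a group action,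
`x T_{n₁} ⋯ T_{n_k}` is the orbit of `x` under the product of the `T_{n_i}`, which does not
depend on their order. For (ii): `1 ↦ 1/2 ↦ 1/2` under `(1 2)` then `(1 3)`, but
`1 ↦ 1/3 ↦ 1/3` in the other order.
-/

lemma List.foldl_smul_eq_prod_reverse_smul {M α : Type*} [Monoid M] [MulAction M α]
    (l : List M) (a : α) : l.foldl (fun b m => m • b) a = l.reverse.prod • a := by
  induction l generalizing a with
  | nil => simp
  | cons m l ih => simp [ih, mul_smul]

section MonotoneSubmonoids

variable {ι M : Type*} [LinearOrder ι] [Monoid M] {S : ι → Submonoid M}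

lemma Submonoid.coe_mul_coe_of_le {H K : Submonoid M} (h : H ≤ K) : (H : Set M) * K = K :=
  (Submonoid.mul_subset h subset_rfl).antisymm (Set.subset_mul_right _ H.one_mem)

lemma Submonoid.coe_mul_coe_of_ge {H K : Submonoid M} (h : K ≤ H) : (H : Set M) * K = H :=
  (Submonoid.mul_subset subset_rfl h).antisymm (Set.subset_mul_left _ K.one_mem)

lemma Submonoid.coe_mul_coe_of_monotone (hS : Monotone S) (a b : ι) :
    (S a : Set M) * S b = S (max a b) := by
  rcases le_total a b with hab | hba
  · rw [max_eq_right hab, Submonoid.coe_mul_coe_of_le (hS hab)]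
  · rw [max_eq_left hba, Submonoid.coe_mul_coe_of_ge (hS hba)]

lemma Submonoid.commute_coe_of_monotone (hS : Monotone S) (a b : ι) :
    Commute (S a : Set M) (S b) := by
  rw [Commute, SemiconjBy, Submonoid.coe_mul_coe_of_monotone hS,
    Submonoid.coe_mul_coe_of_monotone hS, max_comm]

lemma Submonoid.prod_map_coe_of_monotone [OrderBot ι] (hS : Monotone S) :
    ∀ l : List ι, l ≠ [] → (l.map fun i => (S i : Set M)).prod = S (l.foldr max ⊥)
  | [i], _ => by simp
  | i :: j :: l, _ => by
    rw [List.map_cons, List.prod_cons, prod_map_coe_of_monotone hS (j :: l) (List.cons_ne_nil _ _),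
      coe_mul_coe_of_monotone hS]
    rfl

end MonotoneSubmonoids

noncomputable def invPt (n : ℕ+) : Bset := ⟨1 / ((n : ℕ) : ℝ), Or.inr ⟨n, rfl⟩⟩

lemma invPt_injective : Function.Injective invPt := by
  intro n m h
  have h' : (1 : ℝ) / ((n : ℕ) : ℝ) = 1 / ((m : ℕ) : ℝ) := congrArg Subtype.val h
  rw [one_div, one_div, inv_inj, Nat.cast_inj] at h'
  exact PNat.coe_injective h'

lemma fPerm_invPt (σ : Equiv.Perm ℕ+) (n : ℕ+) : fPerm σ (invPt n) = invPt (σ n) := by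
  have h : ∃ m : ℕ+, ((invPt n : Bset) : ℝ) = 1 / ((m : ℕ) : ℝ) := ⟨n, rfl⟩
  have hn : h.choose = n := invPt_injective (Subtype.ext h.choose_spec).symm
  rw [fPerm, dif_pos h]
  exact Subtype.ext (congrArg (fun k : ℕ+ => 1 / ((σ k : ℕ) : ℝ)) hn)

lemma fPerm_zeroPt (σ : Equiv.Perm ℕ+) : fPerm σ zeroPt = zeroPt := by
  have h : ¬ ∃ m : ℕ+, ((zeroPt : Bset) : ℝ) = 1 / ((m : ℕ) : ℝ) := by
    rintro ⟨m, hm⟩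
    exact (one_div_pos.2 (Nat.cast_pos.2 m.pos)).ne' hm.symm
  rw [fPerm, dif_neg h]
  rfl

lemma eq_zeroPt_or_eq_invPt (x : Bset) : x = zeroPt ∨ ∃ n, x = invPt n := by
  obtain ⟨_, rfl | ⟨n, rfl⟩⟩ := x
  exacts [Or.inl rfl, Or.inr ⟨n, rfl⟩]

/-- The paper's right action `x f_σ` becomes a left action here, because Mathlib multiplies
permutations by composition: `(σ * τ) k = σ (τ k)`. -/
noncomputable instance : MulAction (Equiv.Perm ℕ+) Bset where
  smul := fPerm
  one_smul x := by
    obtain rfl | ⟨n, rfl⟩ := eq_zeroPt_or_eq_invPt x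
    exacts [fPerm_zeroPt 1, fPerm_invPt 1 n]
  mul_smul σ τ x := by
    obtain rfl | ⟨n, rfl⟩ := eq_zeroPt_or_eq_invPt x
    · change fPerm _ zeroPt = fPerm σ (fPerm τ zeroPt)
      rw [fPerm_zeroPt, fPerm_zeroPt, fPerm_zeroPt]
    · change fPerm _ (invPt n) = fPerm σ (fPerm τ (invPt n))
      rw [fPerm_invPt, fPerm_invPt, fPerm_invPt, Equiv.Perm.mul_apply]

lemma actSet_eq_smul (P : Set Bset) (S : Set (Equiv.Perm ℕ+)) : actSet P S = S • P := by
  ext y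
  simp only [actSet, Set.mem_smul]
  constructor
  · rintro ⟨x, hx, σ, hσ, rfl⟩
    exact ⟨σ, hσ, x, hx, rfl⟩
  · rintro ⟨σ, hσ, x, hx, rfl⟩
    exact ⟨x, hx, σ, hσ, rfl⟩

def fixAbove (n : ℕ+) : Subgroup (Equiv.Perm ℕ+) := fixingSubgroup (Equiv.Perm ℕ+) (Set.Ioi n)

lemma fixAbove_monotone : Monotone fun n => (fixAbove n).toSubmonoid :=
  fun _ _ h => fixingSubgroup_antitone (Equiv.Perm ℕ+) ℕ+ (Set.Ioi_subset_Ioi h)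

lemma TnSet_eq_coe_fixAbove : TnSet = fun n => ((fixAbove n).toSubmonoid : Set (Equiv.Perm ℕ+)) := by
  ext n σ
  simp [fixAbove, mem_fixingSubgroup_iff, TnSet, Equiv.Perm.smul_def]

lemma prod_map_TnSet (l : List ℕ+) (hl : l ≠ []) :
    (l.map TnSet).prod = TnSet (l.foldr max 1) := by
  rw [TnSet_eq_coe_fixAbove, Submonoid.prod_map_coe_of_monotone fixAbove_monotone l hl, PNat.bot_eq_one]

lemma foldl_actSet_TnSet_perm {l l' : List ℕ+} (h : l.Perm l') (x : Bset) :
    (l.map TnSet).foldl actSet {x} = (l'.map TnSet).foldl actSet {x} := by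
  have hprod : ((l.map TnSet).reverse).prod = ((l'.map TnSet).reverse).prod := by
    rw [← List.map_reverse, ← List.map_reverse, TnSet_eq_coe_fixAbove]
    have hrev : l.reverse.Perm l'.reverse := List.perm_reverse.2 ((List.reverse_perm l).trans h)
    refine (hrev.map _).prod_eq' (List.pairwise_map.2 (List.pairwise_of_forall_sublist ?_))
    exact fun _ => Submonoid.commute_coe_of_monotone fixAbove_monotone _ _
  have hact : actSet = fun P S => S • P := funext₂ actSet_eq_smul
  rw [hact, List.foldl_smul_eq_prod_reverse_smul, List.foldl_smul_eq_prod_reverse_smul, hprod]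

lemma swap_mem_TnSet {i j n : ℕ+} (hi : i ≤ n) (hj : j ≤ n) : Equiv.swap i j ∈ TnSet n :=
  fun _ hk => Equiv.swap_apply_of_ne_of_ne (hi.trans_lt hk).ne' (hj.trans_lt hk).ne'

/-- `(𝔅,(T_n : n ≥ 1))` is a pseudo-multi-transformation group but not a
multi-transformation group: (i) `T_{n₁} ⋯ T_{n_k} = T_{max(n₁,…,n_k)}`, hence the orbit sets
`x T_{n₁} ⋯ T_{n_k}` are invariant under permuting the indices; (ii) there are `σ ∈ T_2`,
`μ ∈ T_3` (the transpositions `(1 2)` and `(1 3)`) with `1 f_σ f_μ ≠ 1 f_μ f_σ`. -/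
theorem stmt0 :
    (∀ l : List ℕ+, l ≠ [] → (l.map TnSet).prod = TnSet (l.foldr max 1)) ∧
    (∀ l l' : List ℕ+, l.Perm l' → ∀ x : Bset,
      (l.map TnSet).foldl actSet {x} = (l'.map TnSet).foldl actSet {x}) ∧
    (∃ σ ∈ TnSet 2, ∃ μ ∈ TnSet 3,
      σ = Equiv.swap 1 2 ∧ μ = Equiv.swap 1 3 ∧
      fPerm μ (fPerm σ onePt) ≠ fPerm σ (fPerm μ onePt)) := by
  have hone : onePt = invPt 1 := Subtype.ext (by norm_num [onePt, invPt])
  refine ⟨prod_map_TnSet, fun l l' h x => foldl_actSet_TnSet_perm h x,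
    Equiv.swap 1 2, swap_mem_TnSet (by decide) le_rfl,
    Equiv.swap 1 3, swap_mem_TnSet (by decide) le_rfl, rfl, rfl, ?_⟩
  simp only [hone, fPerm_invPt, invPt_injective.ne_iff]
  decide
end

section
/- Let S be a set of permutations of the positive integers that is closed under composition and contains the identity, acting on 𝔅 via σ ↦ f_σ. Then the following are equivalent: (1) the action of S on 𝔅 is distal; (3) for every x ∈ 𝔅 the orbit xS = {x f_σ : σ ∈ S} is finite; (4) for every x ∈ 𝔅 \ {0} the orbit xS is finite. -/
open Pointwise Classical

lemma one_div_pnat_pos (n : ℕ+) : 0 < 1 / ((n:ℕ):ℝ) := by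
  have : (0:ℝ) < (n:ℕ) := by exact_mod_cast n.pos
  positivity

lemma one_div_pnat_inj {m n : ℕ+} (h : 1 / ((m:ℕ):ℝ) = 1 / ((n:ℕ):ℝ)) : m = n := by
  have hm : ((m:ℕ):ℝ) ≠ 0 := by exact_mod_cast m.pos.ne'
  have hn : ((n:ℕ):ℝ) ≠ 0 := by exact_mod_cast n.pos.ne'
  field_simp at h
  exact_mod_cast h.symm

lemma fPerm_apply (σ : Equiv.Perm ℕ+) (n : ℕ+) (x : Bset) (hx : (x:ℝ) = 1/((n:ℕ):ℝ)) :
    (fPerm σ x : ℝ) = 1 / (((σ n : ℕ+) : ℕ) : ℝ) := by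
  have h : ∃ m : ℕ+, (x:ℝ) = 1/((m:ℕ):ℝ) := ⟨n, hx⟩
  have hc : h.choose = n := one_div_pnat_inj (h.choose_spec.symm.trans hx)
  simp only [fPerm, dif_pos h, hc]

lemma fPerm_zero (σ : Equiv.Perm ℕ+) (x : Bset) (hx : (x:ℝ) = 0) :
    (fPerm σ x : ℝ) = 0 := by
  have h : ¬ ∃ m : ℕ+, (x:ℝ) = 1/((m:ℕ):ℝ) := by
    rintro ⟨m, hm⟩
    exact (one_div_pnat_pos m).ne' (hm.symm.trans hx)
  simp only [fPerm, dif_neg h]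

lemma fPerm_inj (σ : Equiv.Perm ℕ+) : Function.Injective (fPerm σ) := by
  intro x y hxy
  rcases x.2 with hx | ⟨m, hx⟩ <;> rcases y.2 with hy | ⟨n, hy⟩
  · exact Subtype.ext (hx.trans hy.symm)
  · exfalso
    have := (fPerm_zero σ x hx).symm.trans (congrArg (Subtype.val) hxy)
    rw [fPerm_apply σ n y hy] at this
    exact (one_div_pnat_pos (σ n)).ne' this.symm
  · exfalso
    have := (fPerm_apply σ m x hx).symm.trans (congrArg (Subtype.val) hxy)
    rw [fPerm_zero σ y hy] at this
    exact (one_div_pnat_pos (σ m)).ne' this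
  · have := (fPerm_apply σ m x hx).symm.trans (congrArg (Subtype.val) hxy)
    rw [fPerm_apply σ n y hy] at this
    have := σ.injective (one_div_pnat_inj this)
    exact Subtype.ext (by rw [hx, hy, this])

noncomputable def bIdx (y : Bset) : ℕ+ :=
  if h : ∃ m : ℕ+, (y:ℝ) = 1/((m:ℕ):ℝ) then h.choose else 1

lemma bIdx_spec {y : Bset} (h : (y:ℝ) ≠ 0) : (y:ℝ) = 1/((bIdx y : ℕ):ℝ) := by
  rcases y.2 with h0 | ⟨m, hm⟩
  · exact absurd h0 h
  · have hex : ∃ m : ℕ+, (y:ℝ) = 1/((m:ℕ):ℝ) := ⟨m, hm⟩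
    simp only [bIdx, dif_pos hex]
    exact hex.choose_spec


/-- For a set `S` of permutations of the positive integers closed under
composition and containing the identity, acting on `𝔅` via `σ ↦ f_σ`, the following are
equivalent: (1) the action is distal; (3) every orbit `xS` is finite; (4) every orbit `xS`
with `x ≠ 0` is finite. -/
theorem stmt1 (S : Set (Equiv.Perm ℕ+)) (hid : 1 ∈ S)
    (hmul : ∀ σ ∈ S, ∀ τ ∈ S, σ * τ ∈ S) :
    [IsDistalAction (permAct S),
     ∀ x : Bset, (pointOrbit x S).Finite,
     ∀ x : Bset, (x : ℝ) ≠ 0 → (pointOrbit x S).Finite].TFAE := by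
  tfae_have 2 → 3
  · exact fun h x _ => h x
  tfae_have 3 → 2
  · intro h x
    rcases x.2 with hx | ⟨n, hx⟩
    · apply Set.Finite.subset (Set.finite_singleton ⟨0, Or.inl rfl⟩)
      rintro y ⟨σ, hσ, rfl⟩
      exact Set.mem_singleton_iff.2 (Subtype.ext (fPerm_zero σ x hx))
    · exact h x (by rw [hx]; exact (one_div_pnat_pos n).ne')
  tfae_have 2 → 1
  · rintro h x y ⟨z, hz⟩
    have hfin : {p : Bset × Bset | ∃ f ∈ permAct S, p = (f x, f y)}.Finite := by
      apply Set.Finite.subset ((h x).prod (h y))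
      rintro p ⟨f, ⟨σ, hσ, rfl⟩, rfl⟩
      exact ⟨⟨σ, hσ, rfl⟩, ⟨σ, hσ, rfl⟩⟩
    rw [hfin.isClosed.closure_eq] at hz
    obtain ⟨f, ⟨σ, hσ, rfl⟩, hp⟩ := hz
    exact fPerm_inj σ ((Prod.ext_iff.1 hp).1.symm.trans (Prod.ext_iff.1 hp).2)
  tfae_have 1 → 3
  · intro hd x hx0
    by_contra hfin
    have hinf : (pointOrbit x S).Infinite := hfin
    obtain ⟨n, hx⟩ : ∃ n : ℕ+, (x:ℝ) = 1/((n:ℕ):ℝ) := x.2.resolve_left hx0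
    have horb : ∀ y ∈ pointOrbit x S, (y:ℝ) ≠ 0 := by
      rintro y ⟨σ, hσ, rfl⟩
      rw [fPerm_apply σ n x hx]
      exact (one_div_pnat_pos _).ne'
    have hinj : Set.InjOn (fun y : Bset => ((bIdx y : ℕ))) (pointOrbit x S) := by
      intro a ha b hb hab
      apply Subtype.ext
      rw [bIdx_spec (horb a ha), bIdx_spec (horb b hb)]
      simp only at hab
      rw [hab]
    have himg := hinf.image hinj
    have zeroPt : Bset := ⟨0, Or.inl rfl⟩
    refine absurd (hd x ⟨0, Or.inl rfl⟩ ⟨⟨0, Or.inl rfl⟩, ?_⟩)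
      (fun he => hx0 (congrArg Subtype.val he))
    rw [Metric.mem_closure_iff]
    intro ε hε
    obtain ⟨N, hN⟩ := exists_nat_gt (1/ε)
    obtain ⟨m, ⟨y, hy, hym⟩, hm⟩ := himg.exists_gt N
    simp only at hym
    obtain ⟨σ, hσ, rfl⟩ := hy
    refine ⟨(fPerm σ x, fPerm σ ⟨0, Or.inl rfl⟩), ⟨fPerm σ, ⟨σ, hσ, rfl⟩, rfl⟩, ?_⟩
    have hz : fPerm σ (⟨0, Or.inl rfl⟩ : Bset) = ⟨0, Or.inl rfl⟩ :=
      Subtype.ext (fPerm_zero σ _ rfl)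
    have hval : (fPerm σ x : ℝ) = 1/((m:ℕ):ℝ) := by
      rw [bIdx_spec (horb _ ⟨σ, hσ, rfl⟩), hym]
    have hmpos : (0:ℝ) < (m:ℕ) := by
      have := (bIdx (fPerm σ x)).pos
      rw [hym] at this  -- careful
      exact_mod_cast this
    have hεm : 1/((m:ℕ):ℝ) < ε := by
      have h1 : (1:ℝ)/ε < (N:ℝ) := hN
      have h2 : ((N:ℕ):ℝ) < ((m:ℕ):ℝ) := by exact_mod_cast hm
      rw [div_lt_iff₀ hε] at h1
      rw [div_lt_iff₀ hmpos]
      nlinarith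
    rw [Prod.dist_eq]
    simp only [hz]
    rw [Subtype.dist_eq, Subtype.dist_eq, hval]
    simp only [Real.dist_eq]
    rw [max_lt_iff]
    constructor
    · rw [abs_of_nonpos (by rw [zero_sub]; exact neg_nonpos.2 (by positivity))]
      simpa using hεm
    · simpa using hε
  tfae_finish
end

section
/- Let a monoid S act faithfully on a set X, and let (S_α)_{α∈Γ} be a co-decomposition of (X,S), with e ∈ S_α for every α. Then S = ⋃ { S_{i_1} S_{i_2} ⋯ S_{i_n} : n ≥ 1 and i_1, …, i_n ∈ Γ are pairwise distinct }, where S_{i_1}⋯S_{i_n} denotes the setwise product {s_1⋯s_n : s_j ∈ S_{i_j}}. -/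
/-!
By faithfulness, the co-decomposition condition says that in `S` itself a product of elements
of pairwise distinct `S_α` does not depend on the order of its factors. Hence a generator
`s ∈ S_α` multiplied on the left onto a product `s₁ ⋯ sₙ` with distinct labels can be merged
into the factor from `S_α` (moved to the front first), or prepended if there is none; by
induction along the generation of `S`, every element is such a product.
-/

open Pointwise

/-- The multi-transformation (co-decomposition) condition for a right action `act` of a
monoid `M` on `X` and a family of submonoids `Ssub : Γ → Submonoid M`: for pairwise
distinct indices `α₁, …, αₙ`, elements `sⱼ ∈ S_{αⱼ}` and every `x`, the value
`x s₁ s₂ ⋯ sₙ` is unchanged under permuting the factors. -/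
def MultiCond {M X Γ : Type*} [Monoid M] (act : X → M → X) (Ssub : Γ → Submonoid M) : Prop :=
  ∀ l l' : List (Γ × M), (l.map Prod.fst).Nodup → (∀ p ∈ l, p.2 ∈ Ssub p.1) →
    l.Perm l' → ∀ x : X, act x (l.map Prod.snd).prod = act x (l'.map Prod.snd).prod

section Words

variable {M Γ : Type*} [Monoid M] {Ssub : Γ → Submonoid M}

def wordProd (l : List (Σ α, Ssub α)) : M := (l.map fun p => (p.2 : M)).prod

@[simp]
theorem wordProd_cons (p : Σ α, Ssub α) (l : List (Σ α, Ssub α)) :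
    wordProd (p :: l) = p.2 * wordProd l := rfl

theorem wordProd_mem_list_prod (l : List (Σ α, Ssub α)) :
    wordProd l ∈ ((l.map Sigma.fst).map fun α => (Ssub α : Set M)).prod := by
  induction l with
  | nil => exact Set.mem_one.2 rfl
  | cons p l ih => exact Set.mul_mem_mul p.2.prop ih

variable (Ssub) in
def ProdPermInvariant : Prop :=
  ∀ l l' : List (Σ α, Ssub α), (l.map Sigma.fst).Nodup → l.Perm l' → wordProd l = wordProd l'

namespace ProdPermInvariant

variable (h : ProdPermInvariant Ssub)
include h

theorem exists_nodup_wordProd_eq_mul (x : Σ α, Ssub α) {l : List (Σ α, Ssub α)}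
    (hl : (l.map Sigma.fst).Nodup) :
    ∃ l' : List (Σ α, Ssub α), l' ≠ [] ∧ (l'.map Sigma.fst).Nodup ∧
      wordProd l' = x.2 * wordProd l := by
  by_cases hx : x.1 ∈ l.map Sigma.fst
  · obtain ⟨⟨β, t⟩, hq, hβ⟩ := List.mem_map.1 hx
    obtain ⟨a, b, rfl⟩ := List.append_of_mem hq
    obtain ⟨α, s⟩ := x
    obtain rfl : β = α := hβ
    have hperm : (a ++ ⟨β, t⟩ :: b).Perm (⟨β, t⟩ :: (a ++ b)) := List.perm_middle
    have hnd : ((⟨β, t⟩ :: (a ++ b)).map Sigma.fst).Nodup := (hperm.map _).nodup_iff.1 hl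
    refine ⟨⟨β, s * t⟩ :: (a ++ b), List.cons_ne_nil _ _, by simpa using hnd, ?_⟩
    rw [h _ _ hl hperm]
    simp only [wordProd_cons, Submonoid.coe_mul, mul_assoc]
  · exact ⟨x :: l, List.cons_ne_nil _ _, List.nodup_cons.2 ⟨hx, hl⟩, rfl⟩

theorem exists_nodup_wordProd_eq_mul_wordProd (l₁ : List (Σ α, Ssub α))
    {l₂ : List (Σ α, Ssub α)} (hl₂ : (l₂.map Sigma.fst).Nodup) (hne : l₂ ≠ []) :
    ∃ l : List (Σ α, Ssub α), l ≠ [] ∧ (l.map Sigma.fst).Nodup ∧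
      wordProd l = wordProd l₁ * wordProd l₂ := by
  induction l₁ with
  | nil => exact ⟨l₂, hne, hl₂, (one_mul _).symm⟩
  | cons x l₁ ih =>
    obtain ⟨l, -, hl, hprod⟩ := ih
    obtain ⟨l', hne', hl', hprod'⟩ := h.exists_nodup_wordProd_eq_mul x hl
    exact ⟨l', hne', hl', by rw [hprod', hprod, wordProd_cons, mul_assoc]⟩

theorem exists_nodup_wordProd_eq_of_mem_closure {s : M}
    (hs : s ∈ Subsemigroup.closure (⋃ α, (Ssub α : Set M))) :
    ∃ l : List (Σ α, Ssub α), l ≠ [] ∧ (l.map Sigma.fst).Nodup ∧ wordProd l = s := by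
  induction hs using Subsemigroup.closure_induction with
  | mem s hs =>
    obtain ⟨α, hs⟩ := Set.mem_iUnion.1 hs
    exact ⟨[⟨α, ⟨s, hs⟩⟩], List.cons_ne_nil _ _, List.nodup_singleton _, mul_one s⟩
  | mul s t _ _ hs ht =>
    obtain ⟨l₁, -, -, rfl⟩ := hs
    obtain ⟨l₂, hne, hl₂, rfl⟩ := ht
    exact h.exists_nodup_wordProd_eq_mul_wordProd l₁ hl₂ hne

end ProdPermInvariant

end Words

theorem MultiCond.prodPermInvariant {M X Γ : Type*} [Monoid M] {act : X → M → X}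
    {Ssub : Γ → Submonoid M} (hfaith : ∀ s t : M, (∀ x, act x s = act x t) → s = t)
    (hmulti : MultiCond act Ssub) : ProdPermInvariant Ssub := by
  intro l l' hl hperm
  let toPair : (Σ α, Ssub α) → Γ × M := fun p => (p.1, p.2)
  have hfst : (l.map toPair).map Prod.fst = l.map Sigma.fst := by rw [List.map_map]; rfl
  have hsnd (w : List (Σ α, Ssub α)) : ((w.map toPair).map Prod.snd).prod = wordProd w := by
    rw [List.map_map]; rfl
  have hmem : ∀ p ∈ l.map toPair, p.2 ∈ Ssub p.1 := by
    simp only [List.mem_map]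
    rintro _ ⟨p, -, rfl⟩
    exact p.2.prop
  refine hfaith _ _ fun x => ?_
  simpa only [hsnd] using hmulti _ _ (hfst ▸ hl) hmem (hperm.map toPair) x

theorem stmt5_general {M X Γ : Type*} [Monoid M] (act : X → M → X)
    (hfaith : ∀ s t : M, (∀ x, act x s = act x t) → s = t)
    (Ssub : Γ → Submonoid M)
    (hgen : Subsemigroup.closure (⋃ α, (Ssub α : Set M)) = ⊤)
    (hmulti : MultiCond act Ssub) :
    ∀ s : M, ∃ l : List Γ, l ≠ [] ∧ l.Nodup ∧
      s ∈ (l.map (fun α => (Ssub α : Set M))).prod := by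
  intro s
  have hs : s ∈ Subsemigroup.closure (⋃ α, (Ssub α : Set M)) := hgen ▸ Subsemigroup.mem_top s
  obtain ⟨l, hne, hl, rfl⟩ :=
    (hmulti.prodPermInvariant hfaith).exists_nodup_wordProd_eq_of_mem_closure hs
  exact ⟨l.map Sigma.fst, by simpa using hne, hl, wordProd_mem_list_prod l⟩

/-- If a monoid `S` acts faithfully on `X` and `(S_α)_{α∈Γ}` is a
co-decomposition of `(X,S)`, then `S` is the union of the setwise products
`S_{i₁} S_{i₂} ⋯ S_{iₙ}` over all finite sequences of pairwise distinct indices. -/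
theorem stmt5 {M X Γ : Type*} [Monoid M] (act : X → M → X)
    (hone : ∀ x, act x 1 = x)
    (hact : ∀ x s t, act x (s * t) = act (act x s) t)
    (hfaith : ∀ s t : M, (∀ x, act x s = act x t) → s = t)
    (Ssub : Γ → Submonoid M)
    (hdistinct : Function.Injective Ssub)
    (hgen : Subsemigroup.closure (⋃ α, (Ssub α : Set M)) = ⊤)
    (hmulti : MultiCond act Ssub) :
    ∀ s : M, ∃ l : List Γ, l ≠ [] ∧ l.Nodup ∧
      s ∈ (l.map (fun α => (Ssub α : Set M))).prod :=
  stmt5_general act hfaith Ssub hgen hmulti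
end

section
/- Let T be the group of finitary permutations of the positive integers. If (S_α)_{α∈Γ} is a family of subsemigroups of T, each containing the identity, whose union generates T as a semigroup, and such that st = ts whenever s ∈ S_α, t ∈ S_β with α ≠ β, then there exist α ∈ Γ and a positive integer k such that the orbit {σ(k) : σ ∈ S_α} is infinite. -/
open Equiv Function

namespace Finset

variable {α β : Type*} [Monoid β]

theorem noncommProd_eq_of_subset {s t : Finset α} (f : α → β)
    (comm : (t : Set α).Pairwise (Commute on f)) (h : s ⊆ t) (hf : ∀ x ∈ t, x ∉ s → f x = 1) :
    t.noncommProd f comm = s.noncommProd f (comm.mono (coe_subset.2 h)) := by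
  classical
  obtain ⟨u, rfl, hsu⟩ : ∃ u, t = s ∪ u ∧ Disjoint s u :=
    ⟨t \ s, (union_sdiff_of_subset h).symm, disjoint_sdiff⟩
  rw [noncommProd_union_of_disjoint hsu,
    noncommProd_eq_pow_card u f _ 1 fun x hx =>
      hf x (mem_union_right s hx) (disjoint_right.1 hsu hx),
    one_pow, mul_one]

theorem commute_noncommProd_of_mem {s : Finset α} {f : α → β}
    (comm : (s : Set α).Pairwise (Commute on f)) {i : α} (hi : i ∈ s) :
    Commute (f i) (s.noncommProd f comm) :=
  noncommProd_commute _ _ _ _ fun j hj => by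
    rcases eq_or_ne i j with rfl | hij
    · exact Commute.refl _
    · exact comm hi hj hij

end Finset

namespace Submonoid

variable {M ι : Type*} [Monoid M] {S : ι → Submonoid M}

theorem exists_noncommProd_eq_of_mem_iSup
    (hS : Pairwise fun i j => ∀ x ∈ S i, ∀ y ∈ S j, Commute x y) {x : M} (hx : x ∈ ⨆ i, S i) :
    ∃ (s : Finset ι) (f : ι → M) (hf : ∀ i, f i ∈ S i), (∀ i ∉ s, f i = 1) ∧
      x = s.noncommProd f fun i _ j _ hij => hS hij _ (hf i) _ (hf j) := by
  classical
  induction hx using iSup_induction' with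
  | mem i x hx =>
    refine ⟨{i}, Pi.mulSingle i x, fun j => ?_, fun j hj => ?_, ?_⟩
    · rcases eq_or_ne j i with rfl | hji
      · simpa using hx
      · simp [hji, one_mem]
    · exact Pi.mulSingle_eq_of_ne (Finset.notMem_singleton.1 hj) _
    · simp
  | one => exact ⟨∅, 1, fun i => one_mem _, fun _ _ => rfl, rfl⟩
  | mul x y _ _ ihx ihy =>
    obtain ⟨s, f, hf, hfs, rfl⟩ := ihx
    obtain ⟨t, g, hg, hgt, rfl⟩ := ihy
    refine ⟨s ∪ t, f * g, fun i => mul_mem (hf i) (hg i), fun i hi => ?_, ?_⟩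
    · rw [Finset.mem_union, not_or] at hi
      simp [hfs i hi.1, hgt i hi.2]
    · have comm (h : ι → M) (hh : ∀ i, h i ∈ S i) : ((s ∪ t : Finset ι) : Set ι).Pairwise
          (Commute on h) := fun i _ j _ hij => hS hij _ (hh i) _ (hh j)
      rw [Finset.noncommProd_mul_distrib f g (comm f hf) (comm g hg)
          fun i _ j _ hij => hS hij _ (hg i) _ (hf j),
        Finset.noncommProd_eq_of_subset f _ Finset.subset_union_left fun i _ hi => hfs i hi,
        Finset.noncommProd_eq_of_subset g _ Finset.subset_union_right fun i _ hi => hgt i hi]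

theorem mem_iSup_inf_centralizer_of_mem_iSup
    (hS : Pairwise fun i j => ∀ x ∈ S i, ∀ y ∈ S j, Commute x y) {x : M} (hx : x ∈ ⨆ i, S i) :
    x ∈ ⨆ i, S i ⊓ centralizer {x} := by
  obtain ⟨s, f, hf, -, hxf⟩ := exists_noncommProd_eq_of_mem_iSup hS hx
  have hfactors : ∀ i ∈ s, f i ∈ ⨆ i, S i ⊓ centralizer {x} := by
    refine fun i hi => mem_iSup_of_mem i ⟨hf i, mem_centralizer_iff.2 fun _ hg => ?_⟩
    rw [Set.mem_singleton_iff.1 hg, hxf]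
    exact (Finset.commute_noncommProd_of_mem _ hi).eq.symm
  have := noncommProd_mem _ s f (fun i _ j _ hij => hS hij _ (hf i) _ (hf j)) hfactors
  rwa [← hxf] at this

end Submonoid

namespace Equiv.Perm

variable {α ι : Type*}

theorem apply_eq_self_of_commute_swap [DecidableEq α] {g : Perm α} {a b : α} (hab : a ≠ b)
    (hg : Commute g (swap a b)) (hgb : g a ≠ b) : g a = a := by
  by_contra hga
  have hgab : g b = g a := by
    simpa [swap_apply_of_ne_of_ne hga hgb] using congr($hg.eq a)
  exact hab (g.injective hgab).symm

theorem exists_mem_apply_eq_of_swap_mem_iSup [DecidableEq α] {S : ι → Submonoid (Perm α)}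
    (hS : Pairwise fun i j => ∀ x ∈ S i, ∀ y ∈ S j, Commute x y) {a b : α} (hab : a ≠ b)
    (hswap : swap a b ∈ ⨆ i, S i) : ∃ i, ∃ g ∈ S i, g a = b := by
  by_contra! h
  have hle : ⨆ i, S i ⊓ Submonoid.centralizer {swap a b} ≤
      MulAction.stabilizerSubmonoid (Perm α) a :=
    iSup_le fun i g ⟨hgS, hgc⟩ => apply_eq_self_of_commute_swap hab
      (Submonoid.mem_centralizer_iff.1 hgc _ rfl).symm (h i g hgS)
  have := MulAction.mem_stabilizerSubmonoid_iff.1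
    (hle (Submonoid.mem_iSup_inf_centralizer_of_mem_iSup hS hswap))
  rw [Perm.smul_def, swap_apply_left] at this
  exact hab this.symm

theorem fixedPoints_subset_orbit {S : ι → Submonoid (Perm α)}
    (hS : Pairwise fun i j => ∀ x ∈ S i, ∀ y ∈ S j, Commute x y)
    (hmove : ∀ a b, a ≠ b → ∃ j, ∃ t ∈ S j, t a = b) {i : ι} {s : Perm α} (hs : s ∈ S i)
    {a : α} (hsa : s a ≠ a) : fixedPoints s ⊆ {m | ∃ σ ∈ S i, σ a = m} := by
  intro n hn
  obtain ⟨j, t, ht, rfl⟩ := hmove a n fun han => hsa (han ▸ hn)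
  rcases eq_or_ne i j with rfl | hij
  · exact ⟨t, ht, rfl⟩
  · refine absurd (t.injective ?_) hsa
    calc t (s a) = s (t a) := congr($((hS hij s hs t ht).eq) a).symm
      _ = t a := hn

end Equiv.Perm

theorem swap_mem_Tfin (a b : ℕ+) : Equiv.swap a b ∈ Tfin :=
  ⟨max a b, fun _ hk => swap_apply_of_ne_of_ne (max_lt_iff.1 hk).1.ne' (max_lt_iff.1 hk).2.ne'⟩

theorem infinite_fixedPoints_of_mem_Tfin {σ : Equiv.Perm ℕ+} (hσ : σ ∈ Tfin) :
    (fixedPoints σ).Infinite := by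
  obtain ⟨n, hn⟩ := hσ
  exact (Set.Ioi_infinite n).mono hn

/-- If a family of subsemigroups of the group `T` of finitary
permutations, each containing the identity, has union generating `T` and elements from
distinct members commute, then some member has an infinite orbit on the positive
integers. -/
theorem stmt9 {Γ : Type*} (Ssub : Γ → Set (Equiv.Perm ℕ+))
    (hsub : ∀ α, Ssub α ⊆ Tfin)
    (hid : ∀ α, 1 ∈ Ssub α)
    (hclosed : ∀ α, ∀ σ ∈ Ssub α, ∀ τ ∈ Ssub α, σ * τ ∈ Ssub α)
    (hgen : (Subsemigroup.closure (⋃ α, Ssub α) : Set (Equiv.Perm ℕ+)) = Tfin)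
    (hcomm : ∀ α β, α ≠ β → ∀ s ∈ Ssub α, ∀ t ∈ Ssub β, s * t = t * s) :
    ∃ α, ∃ k : ℕ+, {m : ℕ+ | ∃ σ ∈ Ssub α, σ k = m}.Infinite := by
  let S (α : Γ) : Submonoid (Equiv.Perm ℕ+) :=
    { carrier := Ssub α, mul_mem' := fun hσ hτ => hclosed α _ hσ _ hτ, one_mem' := hid α }
  have hS : Pairwise fun α β => ∀ s ∈ S α, ∀ t ∈ S β, Commute s t :=
    fun α β h => hcomm α β h
  have hclosure : Subsemigroup.closure (⋃ α, Ssub α) ≤ (⨆ α, S α).toSubsemigroup :=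
    Subsemigroup.closure_le.2 <| Set.iUnion_subset fun α _ hs => Submonoid.mem_iSup_of_mem α hs
  have hmove (a b : ℕ+) (hab : a ≠ b) : ∃ α, ∃ t ∈ S α, t a = b := by
    refine Perm.exists_mem_apply_eq_of_swap_mem_iSup hS hab (hclosure ?_)
    rw [← SetLike.mem_coe, hgen]
    exact swap_mem_Tfin a b
  obtain ⟨α, s, hs, hs1⟩ := hmove 1 2 (by decide)
  refine ⟨α, 1, (infinite_fixedPoints_of_mem_Tfin (hsub α (show s ∈ Ssub α from hs))).mono ?_⟩
  exact Perm.fixedPoints_subset_orbit hS hmove hs (hs1 ▸ by decide)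
end

section
/- Let G be the full symmetric group on the positive integers. If (S_α)_{α∈Γ} is a family of subsemigroups of G, each containing the identity, whose union generates G as a semigroup, and such that for all α_1,…,α_n ∈ Γ, every positive integer k, and every permutation m of {1,…,n}, with composition applied left-to-right, {k σ_1 σ_2 ⋯ σ_n : σ_j ∈ S_{α_j}} = {k σ_{m_1} σ_{m_2} ⋯ σ_{m_n} : σ_{m_j} ∈ S_{α_{m_j}}}, then there exist α ∈ Γ and a positive integer k whose orbit {σ(k) : σ ∈ S_α} is infinite. -/
/-- The action of a set of permutations on a set of positive integers (right action):
`P A = {k σ : k ∈ P, σ ∈ A}`. -/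
def natActSet (P : Set ℕ+) (A : Set (Equiv.Perm ℕ+)) : Set ℕ+ :=
  {m | ∃ k ∈ P, ∃ σ ∈ A, m = σ k}

private lemma foldl_biUnion (Ls : List (Set (Equiv.Perm ℕ+))) (S : Set ℕ+) :
    Ls.foldl natActSet S = ⋃ k ∈ S, Ls.foldl natActSet {k} := by
  induction Ls generalizing S with
  | nil => simp
  | cons A Ls ih =>
    simp only [List.foldl_cons]
    rw [ih (natActSet S A)]
    have hR : (⋃ k ∈ S, Ls.foldl natActSet (natActSet {k} A))
        = ⋃ k ∈ S, ⋃ j ∈ natActSet {k} A, Ls.foldl natActSet {j} :=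
      Set.iUnion_congr fun k => Set.iUnion_congr fun _ => ih _
    rw [hR]
    ext m
    simp only [Set.mem_iUnion]
    constructor
    · rintro ⟨j, hj, hm⟩
      obtain ⟨k, hk, σ, hσ, rfl⟩ := hj
      exact ⟨k, hk, σ k, ⟨k, rfl, σ, hσ, rfl⟩, hm⟩
    · rintro ⟨k, hk, j, hj, hm⟩
      obtain ⟨k', hk', σ, hσ, rfl⟩ := hj
      have hkk : k' = k := hk'
      subst hkk
      exact ⟨σ k', ⟨k', hk, σ, hσ, rfl⟩, hm⟩

section aux

variable {Γ : Type*} (Ssub : Γ → Set (Equiv.Perm ℕ+))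

private lemma absorb (hid : ∀ α, 1 ∈ Ssub α)
    (hclosed : ∀ α, ∀ σ ∈ Ssub α, ∀ τ ∈ Ssub α, σ * τ ∈ Ssub α)
    (α : Γ) (S : Set ℕ+) :
    natActSet (natActSet S (Ssub α)) (Ssub α) = natActSet S (Ssub α) := by
  ext m
  simp only [natActSet, Set.mem_setOf_eq]
  constructor
  · rintro ⟨j, ⟨k, hk, σ, hσ, rfl⟩, τ, hτ, rfl⟩
    exact ⟨k, hk, τ * σ, hclosed α τ hτ σ hσ, (Equiv.Perm.mul_apply _ _ _).symm⟩
  · rintro ⟨k, hk, σ, hσ, rfl⟩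
    exact ⟨σ k, ⟨k, hk, σ, hσ, rfl⟩, 1, hid α, rfl⟩

variable (hid : ∀ α, 1 ∈ Ssub α)
    (hclosed : ∀ α, ∀ σ ∈ Ssub α, ∀ τ ∈ Ssub α, σ * τ ∈ Ssub α)
    (hpseudo : ∀ l l' : List Γ, l.Perm l' → ∀ k : ℕ+,
      (l.map Ssub).foldl natActSet {k} = (l'.map Ssub).foldl natActSet {k})

include hid hclosed hpseudo

private lemma twohead (a : Γ) (l : List Γ) (k : ℕ+) :
    ((a :: a :: l).map Ssub).foldl natActSet {k}
      = ((a :: l).map Ssub).foldl natActSet {k} := by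
  have p1 : (a :: a :: l).Perm (l ++ [a, a]) :=
    List.perm_append_comm (l₁ := [a, a]) (l₂ := l)
  have p2 : (a :: l).Perm (l ++ [a]) :=
    List.perm_append_comm (l₁ := [a]) (l₂ := l)
  rw [hpseudo _ _ p1 k, hpseudo _ _ p2 k]
  simp only [List.map_append, List.foldl_append, List.map_cons, List.map_nil,
    List.foldl_cons, List.foldl_nil]
  exact absorb Ssub hid hclosed a _

private lemma doubling : ∀ (l : List Γ) (k : ℕ+),
    (((l ++ l)).map Ssub).foldl natActSet {k} = (l.map Ssub).foldl natActSet {k} := by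
  intro l
  induction l with
  | nil => simp
  | cons a l ih =>
    intro k
    have h1 : ((a :: l) ++ (a :: l)).Perm (a :: a :: (l ++ l)) :=
      List.Perm.cons a List.perm_middle
    rw [hpseudo _ _ h1 k, twohead Ssub hid hclosed hpseudo a (l ++ l) k]
    simp only [List.map_cons, List.foldl_cons]
    rw [foldl_biUnion, foldl_biUnion ((List.map Ssub l))]
    exact Set.iUnion_congr fun j => Set.iUnion_congr fun _ => ih j

private lemma repeatl : ∀ (m : ℕ) (l : List Γ) (k : ℕ+),
    ((List.replicate (m + 1) l).flatten.map Ssub).foldl natActSet {k}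
      = (l.map Ssub).foldl natActSet {k} := by
  intro m
  induction m with
  | zero => intro l k; simp
  | succ m ih =>
    intro l k
    have e0 : (List.replicate (m + 2) l).flatten = l ++ (List.replicate (m + 1) l).flatten := by
      rw [List.replicate_succ, List.flatten_cons]
    rw [e0, List.map_append, List.foldl_append, foldl_biUnion]
    have e1 : (⋃ j ∈ (l.map Ssub).foldl natActSet {k},
        ((List.replicate (m + 1) l).flatten.map Ssub).foldl natActSet {j})
        = ⋃ j ∈ (l.map Ssub).foldl natActSet {k}, (l.map Ssub).foldl natActSet {j} :=
      Set.iUnion_congr fun j => Set.iUnion_congr fun _ => ih l j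
    rw [e1, ← foldl_biUnion]
    have h2 := doubling Ssub hid hclosed hpseudo l k
    rwa [List.map_append, List.foldl_append] at h2

omit hid hclosed hpseudo

private lemma mem_prod : ∀ (lp : List (Γ × Equiv.Perm ℕ+)),
    (∀ p ∈ lp, p.2 ∈ Ssub p.1) → ∀ k : ℕ+,
    ((lp.map Prod.snd).prod) k ∈ (((lp.map Prod.fst).reverse).map Ssub).foldl natActSet {k} := by
  intro lp
  induction lp with
  | nil => intro _ k; simp
  | cons p lp ih =>
    intro h k
    simp only [List.map_cons, List.prod_cons, List.reverse_cons, List.map_append,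
      List.foldl_append, List.map_nil, List.foldl_cons, List.foldl_nil]
    have hmem := ih (fun q hq => h q (List.mem_cons_of_mem _ hq)) k
    exact ⟨_, hmem, p.2, h p (List.mem_cons_self), (Equiv.Perm.mul_apply _ _ _).symm⟩

private lemma pairs_exists : ∀ (L : List (Equiv.Perm ℕ+)),
    (∀ τ ∈ L, τ ∈ ⋃ α, Ssub α) →
    ∃ lp : List (Γ × Equiv.Perm ℕ+), lp.map Prod.snd = L ∧ ∀ p ∈ lp, p.2 ∈ Ssub p.1 := by
  intro L
  induction L with
  | nil => exact fun _ => ⟨[], rfl, by simp⟩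
  | cons τ L ih =>
    intro h
    obtain ⟨lp, h1, h2⟩ := ih fun x hx => h x (List.mem_cons_of_mem _ hx)
    obtain ⟨α, hτ⟩ := Set.mem_iUnion.mp (h τ (List.mem_cons_self))
    refine ⟨(α, τ) :: lp, by simp [h1], ?_⟩
    intro q hq
    rcases List.mem_cons.mp hq with rfl | hq
    · exact hτ
    · exact h2 q hq

private lemma fold_finite
    (hfin : ∀ α (k : ℕ+), {m : ℕ+ | ∃ σ ∈ Ssub α, σ k = m}.Finite) :
    ∀ (l : List Γ) (S : Set ℕ+), S.Finite → ((l.map Ssub).foldl natActSet S).Finite := by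
  intro l
  induction l with
  | nil => intro S h; simpa using h
  | cons a l ih =>
    intro S hS
    simp only [List.map_cons, List.foldl_cons]
    apply ih
    have e : natActSet S (Ssub a) = ⋃ k ∈ S, {m : ℕ+ | ∃ σ ∈ Ssub a, σ k = m} := by
      ext m
      simp only [natActSet, Set.mem_setOf_eq, Set.mem_iUnion]
      constructor
      · rintro ⟨k, hk, σ, hσ, rfl⟩; exact ⟨k, hk, σ, hσ, rfl⟩
      · rintro ⟨k, hk, σ, hσ, rfl⟩; exact ⟨k, hk, σ, hσ, rfl⟩
    rw [e]
    exact hS.biUnion fun k _ => hfin a k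

end aux

private def fZ : ℕ+ ≃ ℤ := Equiv.pnatEquivNat.trans (Denumerable.eqv ℤ).symm

private def sigZ : Equiv.Perm ℕ+ := (fZ.trans (Equiv.addRight (1 : ℤ))).trans fZ.symm

private lemma sigZ_apply (k : ℕ+) : sigZ k = fZ.symm (fZ k + 1) := rfl

private lemma sigZ_pow : ∀ (m : ℕ) (k : ℕ+), (sigZ ^ m) k = fZ.symm (fZ k + m) := by
  intro m
  induction m with
  | zero => intro k; simp
  | succ m ih =>
    intro k
    rw [pow_succ, Equiv.Perm.mul_apply, ih, sigZ_apply, Equiv.apply_symm_apply]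
    congr 1
    push_cast
    ring

/-- If a family of subsemigroups of the full symmetric group on the
positive integers, each containing the identity, has union generating the whole group and
its orbit sets `k S_{α₁} ⋯ S_{αₙ}` are invariant under permuting the factors, then some
member has an infinite orbit. -/
theorem stmt11 {Γ : Type*} (Ssub : Γ → Set (Equiv.Perm ℕ+))
    (hid : ∀ α, 1 ∈ Ssub α)
    (hclosed : ∀ α, ∀ σ ∈ Ssub α, ∀ τ ∈ Ssub α, σ * τ ∈ Ssub α)
    (hgen : Subsemigroup.closure (⋃ α, Ssub α) = (⊤ : Subsemigroup (Equiv.Perm ℕ+)))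
    (hpseudo : ∀ l l' : List Γ, l.Perm l' → ∀ k : ℕ+,
      (l.map Ssub).foldl natActSet {k} = (l'.map Ssub).foldl natActSet {k}) :
    ∃ α, ∃ k : ℕ+, {m : ℕ+ | ∃ σ ∈ Ssub α, σ k = m}.Infinite := by
  by_contra hcon
  push_neg at hcon
  have hfin : ∀ α (k : ℕ+), {m : ℕ+ | ∃ σ ∈ Ssub α, σ k = m}.Finite :=
    fun α k => hcon α k
  -- decompose sigZ as a product of elements of the union
  have hσ : sigZ ∈ Subsemigroup.closure (⋃ α, Ssub α) := by
    rw [hgen]; exact Subsemigroup.mem_top _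
  have hdecomp : ∃ L : List (Equiv.Perm ℕ+),
      (∀ τ ∈ L, τ ∈ ⋃ α, Ssub α) ∧ L.prod = sigZ := by
    refine Subsemigroup.closure_induction
      (p := fun x _ => ∃ L : List (Equiv.Perm ℕ+),
        (∀ τ ∈ L, τ ∈ ⋃ α, Ssub α) ∧ L.prod = x) ?_ ?_ hσ
    · intro x hx
      exact ⟨[x], by simpa using hx, by simp⟩
    · rintro x y _ _ ⟨L1, h1, e1⟩ ⟨L2, h2, e2⟩
      refine ⟨L1 ++ L2, ?_, by simp [e1, e2]⟩
      intro τ hτ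
      rcases List.mem_append.mp hτ with h | h
      · exact h1 τ h
      · exact h2 τ h
  obtain ⟨L, hL, hLprod⟩ := hdecomp
  obtain ⟨lp, hlp1, hlp2⟩ := pairs_exists Ssub L hL
  set lΓ : List Γ := lp.map Prod.fst with hlΓ
  set k : ℕ+ := 1
  have key : ∀ m : ℕ, (sigZ ^ (m + 1)) k ∈ (lΓ.map Ssub).foldl natActSet {k} := by
    intro m
    have hbig : ∀ p ∈ (List.replicate (m + 1) lp).flatten, p.2 ∈ Ssub p.1 := by
      intro p hp
      rw [List.mem_flatten] at hp
      obtain ⟨l', hl', hp⟩ := hp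
      rw [List.eq_of_mem_replicate hl'] at hp
      exact hlp2 p hp
    have hmem := mem_prod Ssub _ hbig k
    have e1 : (((List.replicate (m + 1) lp).flatten.map Prod.snd)).prod = sigZ ^ (m + 1) := by
      rw [List.map_flatten, List.map_replicate, hlp1, List.prod_flatten,
        List.map_replicate, List.prod_replicate, hLprod]
    have e2 : ((List.replicate (m + 1) lp).flatten.map Prod.fst)
        = (List.replicate (m + 1) lΓ).flatten := by
      rw [List.map_flatten, List.map_replicate]
    rw [e1, e2, hpseudo _ _ (List.reverse_perm _) k,
      repeatl Ssub hid hclosed hpseudo m lΓ k] at hmem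
    exact hmem
  have hinj : Function.Injective fun m : ℕ => (sigZ ^ (m + 1)) k := by
    intro a b hab
    simp only [sigZ_pow] at hab
    have h1 := fZ.symm.injective hab
    have h2 : ((a : ℤ) + 1) = ((b : ℤ) + 1) := by push_cast at h1 ⊢; linarith
    omega
  have hinf : ((lΓ.map Ssub).foldl natActSet {k}).Infinite :=
    Set.infinite_of_injective_forall_mem hinj key
  exact hinf (fold_finite Ssub hfin lΓ {k} (Set.finite_singleton k))
end

section
/- For m ≥ 2 let T_m := {η^i φ_{2πn/m} : n ∈ ℤ, i ∈ {0,1}} ⊆ Σ*. Then: (i) each T_m is a finite subgroup of Σ*, and for every z ∈ 𝕊¹ the orbit zT_m is finite, hence not dense, so (𝕊¹,T_m) is not point transitive (in particular not minimal); (ii) Σ* = ⋃_{m≥2} T_m; (iii) T_s T_t = T_t T_s as sets for all s,t ≥ 2. Consequently (𝕊¹,(T_m : m ≥ 2)) is a pseudo-co-decomposition of (𝕊¹,Σ*) to non-point-transitive (non-minimal) transformation groups. -/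
open Real

/-- Rotation of the unit circle by angle `α` : `e^{iθ} ↦ e^{i(α+θ)}`. -/
noncomputable def rotMap (α : ℝ) : Circle → Circle := fun z => Circle.exp α * z

/-- The conjugation map `η : e^{iθ} ↦ e^{-iθ}` of the unit circle. -/
noncomputable def conjMap : Circle → Circle := fun z => z⁻¹

/-- `ε_α = η φ_α : e^{iθ} ↦ e^{i(α-θ)}` (apply `η`, then the rotation `φ_α`). -/
noncomputable def reflMap (α : ℝ) : Circle → Circle := rotMap α ∘ conjMap

/-- `Σ* = {φ_α : α ∈ 2πℚ} ∪ {ε_α : α ∈ 2πℚ}`, the group generated by `η` together with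
the rotations by rational multiples of `2π`. -/
noncomputable def SigmaStar : Set (Circle → Circle) :=
  {f | (∃ q : ℚ, f = rotMap (2 * π * q)) ∨ (∃ q : ℚ, f = reflMap (2 * π * q))}

/-- The orbit `z A` of a point of the circle under a set of self-maps. -/
def circOrbit (z : Circle) (A : Set (Circle → Circle)) : Set Circle := {w | ∃ f ∈ A, w = f z}

/-- `P A = {z f : z ∈ P, f ∈ A}`. -/
def circActSet (P : Set Circle) (A : Set (Circle → Circle)) : Set Circle :=
  {w | ∃ z ∈ P, ∃ f ∈ A, w = f z}

/-- Left-to-right setwise product `A B = {f g : f ∈ A, g ∈ B}` (apply `f`, then `g`). -/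
def compSet (A B : Set (Circle → Circle)) : Set (Circle → Circle) :=
  {h | ∃ f ∈ A, ∃ g ∈ B, h = g ∘ f}

/-- `T_m = {η^i φ_{2πn/m} : n ∈ ℤ, i ∈ {0,1}}` (apply `η^i` first, then the rotation). -/
noncomputable def TmSet (m : ℕ) : Set (Circle → Circle) :=
  {f | ∃ n : ℤ, f = rotMap (2 * π * n / m) ∨ f = rotMap (2 * π * n / m) ∘ conjMap}

/- ## Auxiliary lemmas -/

lemma rot_comp_rot (a b : ℝ) : rotMap b ∘ rotMap a = rotMap (a + b) := by
  funext z
  simp [rotMap, Circle.exp_add, mul_comm, mul_left_comm, mul_assoc]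

lemma rotc_comp_rot (a b : ℝ) :
    (rotMap b ∘ conjMap) ∘ rotMap a = rotMap (b - a) ∘ conjMap := by
  funext z
  simp [rotMap, conjMap, Circle.exp_sub, mul_inv, div_eq_mul_inv,
    mul_comm, mul_left_comm, mul_assoc]

lemma rot_comp_rotc (a b : ℝ) :
    rotMap b ∘ (rotMap a ∘ conjMap) = rotMap (a + b) ∘ conjMap := by
  funext z
  simp [rotMap, conjMap, Circle.exp_add, mul_comm, mul_left_comm, mul_assoc]

lemma rotc_comp_rotc (a b : ℝ) :
    (rotMap b ∘ conjMap) ∘ (rotMap a ∘ conjMap) = rotMap (b - a) := by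
  funext z
  simp [rotMap, conjMap, Circle.exp_sub, mul_inv, div_eq_mul_inv,
    mul_comm, mul_left_comm, mul_assoc]

lemma rot_zero : rotMap 0 = id := by
  funext z; simp [rotMap]

lemma rot_int_period (a : ℝ) (k : ℤ) : rotMap (a + 2 * π * k) = rotMap a := by
  funext z
  simp [rotMap, Circle.exp_add, Circle.exp_two_pi_mul_int]

lemma rot_mem (m : ℕ) (n : ℤ) : rotMap (2 * π * n / m) ∈ TmSet m := ⟨n, Or.inl rfl⟩

lemma rotc_mem (m : ℕ) (n : ℤ) : rotMap (2 * π * n / m) ∘ conjMap ∈ TmSet m :=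
  ⟨n, Or.inr rfl⟩

lemma compSet_subset_swap (s t : ℕ) :
    compSet (TmSet s) (TmSet t) ⊆ compSet (TmSet t) (TmSet s) := by
  rintro h ⟨f, ⟨n, hf | hf⟩, g, ⟨n', hg | hg⟩, rfl⟩ <;> subst hf <;> subst hg
  · refine ⟨_, rot_mem t n', _, rot_mem s n, ?_⟩
    rw [rot_comp_rot, rot_comp_rot, add_comm]
  · refine ⟨_, rotc_mem t n', _, rot_mem s (-n), ?_⟩
    rw [rotc_comp_rot, rot_comp_rotc]
    have : 2 * π * (n' : ℝ) / t - 2 * π * n / s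
        = 2 * π * (n' : ℝ) / t + 2 * π * ((-n : ℤ) : ℝ) / s := by push_cast; ring
    rw [this]
  · refine ⟨_, rot_mem t (-n'), _, rotc_mem s n, ?_⟩
    rw [rot_comp_rotc, rotc_comp_rot]
    have : 2 * π * (n : ℝ) / s + 2 * π * n' / t
        = 2 * π * (n : ℝ) / s - 2 * π * ((-n' : ℤ) : ℝ) / t := by push_cast; ring
    rw [this]
  · refine ⟨_, rot_mem t n', _, rot_mem s (-n), ?_⟩
    rw [rotc_comp_rotc, rot_comp_rot]
    congr 1
    push_cast; ring

lemma compSet_comm (s t : ℕ) : compSet (TmSet s) (TmSet t) = compSet (TmSet t) (TmSet s) :=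
  Set.Subset.antisymm (compSet_subset_swap s t) (compSet_subset_swap t s)

lemma actSet_actSet (P : Set Circle) (A B : Set (Circle → Circle)) :
    circActSet (circActSet P A) B = circActSet P (compSet A B) := by
  ext w
  constructor
  · rintro ⟨y, ⟨x, hx, f, hf, rfl⟩, g, hg, rfl⟩
    exact ⟨x, hx, g ∘ f, ⟨f, hf, g, hg, rfl⟩, rfl⟩
  · rintro ⟨x, hx, h, ⟨f, hf, g, hg, rfl⟩, rfl⟩
    exact ⟨f x, ⟨x, hx, f, hf, rfl⟩, g, hg, rfl⟩

lemma infinite_circle : Infinite Circle := by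
  have h : (Set.Ioc (-π) π).Infinite := Set.Ioc_infinite (by linarith [pi_pos])
  have : Infinite (Set.Ioc (-π) π) := Set.infinite_coe_iff.2 h
  exact Circle.argEquiv.infinite_iff.2 this

lemma tm_finite {m : ℕ} (hm : 0 < m) : (TmSet m).Finite := by
  have hm' : (m : ℝ) ≠ 0 := Nat.cast_ne_zero.2 hm.ne'
  have key : ∀ n : ℤ, ∃ r : Fin m,
      rotMap (2 * π * n / m) = rotMap (2 * π * ((r : ℕ) : ℝ) / m) := by
    intro n
    have hmz : (m : ℤ) ≠ 0 := by exact_mod_cast hm.ne'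
    have hlt' := Int.emod_lt_of_pos n (show (0 : ℤ) < m by exact_mod_cast hm)
    have hlt : (n % m).toNat < m := by omega
    refine ⟨⟨(n % m).toNat, hlt⟩, ?_⟩
    have hcast : (((n % (m : ℤ)).toNat : ℕ) : ℝ) = ((n % m : ℤ) : ℝ) := by
      have := Int.toNat_of_nonneg (Int.emod_nonneg n hmz)
      exact_mod_cast congrArg (fun x : ℤ => (x : ℝ)) this
    have hn : ((m : ℤ) * (n / m) + n % m : ℤ) = n := Int.mul_ediv_add_emod n m
    have hnr : (n : ℝ) = (m : ℝ) * ((n / m : ℤ) : ℝ) + ((n % m : ℤ) : ℝ) := by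
      exact_mod_cast hn.symm
    have hang : 2 * π * (n : ℝ) / m
        = 2 * π * ((n % m : ℤ) : ℝ) / m + 2 * π * ((n / m : ℤ) : ℝ) := by
      rw [hnr]; field_simp; ring
    rw [hang, rot_int_period, hcast]
  have hsub : TmSet m ⊆ Set.range (fun p : Fin m × Bool =>
      if p.2 then rotMap (2 * π * ((p.1 : ℕ) : ℝ) / m) ∘ conjMap
      else rotMap (2 * π * ((p.1 : ℕ) : ℝ) / m)) := by
    rintro f ⟨n, hf | hf⟩ <;> subst hf
    · obtain ⟨r, hr⟩ := key n
      exact ⟨(r, false), by simpa using hr.symm⟩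
    · obtain ⟨r, hr⟩ := key n
      exact ⟨(r, true), by simp [hr]⟩
  exact (Set.finite_range _).subset hsub

/-- (i) Each `T_m` (`m ≥ 2`) is a finite subgroup of `Σ*` with all
orbits on `𝕊¹` finite, hence not dense, so `(𝕊¹,T_m)` is not point transitive;
(ii) `Σ* = ⋃_{m ≥ 2} T_m`; (iii) `T_s T_t = T_t T_s` setwise. Consequently the orbit
sets `z T_{m₁} ⋯ T_{m_k}` are invariant under permuting the factors, i.e.
`(𝕊¹,(T_m : m ≥ 2))` is a pseudo-co-decomposition of `(𝕊¹,Σ*)` to non-point-transitive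
(non-minimal) transformation groups. -/
theorem stmt16 :
    (∀ m : ℕ, 2 ≤ m →
      TmSet m ⊆ SigmaStar ∧ (TmSet m).Finite ∧ id ∈ TmSet m ∧
      (∀ f ∈ TmSet m, ∀ g ∈ TmSet m, g ∘ f ∈ TmSet m) ∧
      (∀ f ∈ TmSet m, ∃ g ∈ TmSet m, f ∘ g = id ∧ g ∘ f = id) ∧
      (∀ z : Circle, (circOrbit z (TmSet m)).Finite ∧ ¬ Dense (circOrbit z (TmSet m)))) ∧
    (⋃ m ∈ {m : ℕ | 2 ≤ m}, TmSet m) = SigmaStar ∧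
    (∀ s t : ℕ, 2 ≤ s → 2 ≤ t → compSet (TmSet s) (TmSet t) = compSet (TmSet t) (TmSet s)) ∧
    (∀ l l' : List ℕ, (∀ m ∈ l, 2 ≤ m) → l.Perm l' → ∀ z : Circle,
      (l.map TmSet).foldl circActSet {z} = (l'.map TmSet).foldl circActSet {z}) := by
  have hsub : ∀ m : ℕ, TmSet m ⊆ SigmaStar := by
    intro m f hf
    obtain ⟨n, hf | hf⟩ := hf <;> subst hf
    · exact Or.inl ⟨(n : ℚ) / m, by congr 1; push_cast; ring⟩
    · exact Or.inr ⟨(n : ℚ) / m, by rw [reflMap]; congr 1; push_cast; ring⟩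
  refine ⟨?_, ?_, fun s t _ _ => compSet_comm s t, ?_⟩
  · intro m hm
    have hm0 : 0 < m := by omega
    refine ⟨hsub m, tm_finite hm0, ?_, ?_, ?_, ?_⟩
    · refine ⟨0, Or.inl ?_⟩
      rw [show 2 * π * ((0 : ℤ) : ℝ) / m = 0 by push_cast; ring, rot_zero]
    · rintro f ⟨n, hf | hf⟩ g ⟨n', hg | hg⟩ <;> subst hf <;> subst hg
      · refine ⟨n + n', Or.inl ?_⟩
        rw [rot_comp_rot]; congr 1; push_cast; ring
      · refine ⟨n' - n, Or.inr ?_⟩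
        rw [rotc_comp_rot]; congr 2; push_cast; ring
      · refine ⟨n + n', Or.inr ?_⟩
        rw [rot_comp_rotc]; congr 2; push_cast; ring
      · refine ⟨n' - n, Or.inl ?_⟩
        rw [rotc_comp_rotc]; congr 1; push_cast; ring
    · rintro f ⟨n, hf | hf⟩ <;> subst hf
      · refine ⟨_, rot_mem m (-n), ?_, ?_⟩
        · rw [rot_comp_rot,
            show 2 * π * ((-n : ℤ) : ℝ) / m + 2 * π * n / m = 0 by push_cast; ring, rot_zero]
        · rw [rot_comp_rot,
            show 2 * π * (n : ℝ) / m + 2 * π * ((-n : ℤ) : ℝ) / m = 0 by push_cast; ring,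
            rot_zero]
      · refine ⟨_, rotc_mem m n, ?_, ?_⟩ <;>
          rw [rotc_comp_rotc, sub_self, rot_zero]
    · intro z
      have horb : circOrbit z (TmSet m) = (fun f => f z) '' TmSet m := by
        ext w; constructor
        · rintro ⟨f, hf, rfl⟩; exact ⟨f, hf, rfl⟩
        · rintro ⟨f, hf, rfl⟩; exact ⟨f, hf, rfl⟩
      have hfin : (circOrbit z (TmSet m)).Finite := by
        rw [horb]; exact (tm_finite hm0).image _
      refine ⟨hfin, fun hd => ?_⟩
      have := infinite_circle
      have huniv : circOrbit z (TmSet m) = Set.univ := by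
        rw [← hfin.isClosed.closure_eq]; exact hd.closure_eq
      exact Set.infinite_univ (huniv ▸ hfin)
  · apply Set.Subset.antisymm
    · intro f hf
      simp only [Set.mem_iUnion] at hf
      obtain ⟨m, _, hfm⟩ := hf
      exact hsub m hfm
    · rintro f (⟨q, rfl⟩ | ⟨q, rfl⟩) <;>
      {
      have hden : (q.den : ℝ) ≠ 0 := Nat.cast_ne_zero.2 q.den_nz
      have hang : 2 * π * (q : ℝ) = 2 * π * ((2 * q.num : ℤ) : ℝ) / ((2 * q.den : ℕ) : ℝ) := by
        rw [Rat.cast_def]; push_cast; field_simp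
      refine Set.mem_biUnion (show (2 * q.den : ℕ) ∈ {m : ℕ | 2 ≤ m} from ?_) ?_
      · have := q.pos; simp only [Set.mem_setOf_eq]; omega
      · refine ⟨2 * q.num, ?_⟩
        first
          | exact Or.inr (by rw [reflMap, ← hang])
          | exact Or.inl (by rw [← hang])
    }
  · intro l l' hl hperm z
    have comm : ∀ x ∈ l.map TmSet, ∀ y ∈ l.map TmSet, ∀ P : Set Circle,
        circActSet (circActSet P x) y = circActSet (circActSet P y) x := by
      intro x hx y hy P
      obtain ⟨s, _, rfl⟩ := List.mem_map.1 hx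
      obtain ⟨t, _, rfl⟩ := List.mem_map.1 hy
      rw [actSet_actSet, actSet_actSet, compSet_comm]
    exact (hperm.map TmSet).foldl_eq' comm {z}
end

section
/- If T is an infinite subgroup of Σ*, then the action (𝕊¹,T) is minimal: for every z ∈ 𝕊¹, the orbit {z h : h ∈ T} is dense in 𝕊¹. -/
open Real

noncomputable def Rot (c : Circle) : Circle → Circle := fun z => c * z
noncomputable def Ref (c : Circle) : Circle → Circle := fun z => c * z⁻¹

lemma Rot_injective : Function.Injective Rot := by
  intro c d h
  simpa [Rot] using congrFun h 1

lemma Ref_injective : Function.Injective Ref := by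
  intro c d h
  simpa [Ref] using congrFun h 1

lemma Rot_ne_Ref (c d : Circle) : Rot c ≠ Ref d := by
  intro h
  have h1 : c = d := by simpa [Rot, Ref] using congrFun h 1
  have h2 := congrFun h (Circle.exp (π/2))
  simp only [Rot, Ref, h1, ← Circle.exp_neg] at h2
  have h3 := mul_left_cancel h2
  obtain ⟨m, hm⟩ := Circle.exp_eq_exp.1 h3
  have hπ : π = (m : ℝ) * (2 * π) := by linarith
  have : (1 : ℝ) = (m : ℝ) * 2 := by
    have hne := pi_ne_zero
    have h4 : (1 : ℝ) * π = ((m:ℝ) * 2) * π := by linarith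
    exact mul_right_cancel₀ hne (by linarith)
  have : (1 : ℤ) = m * 2 := by exact_mod_cast this
  omega

lemma Rot_comp (c d : Circle) : Rot d ∘ Rot c = Rot (d * c) := by
  funext z; simp [Rot, mul_assoc]

lemma Ref_comp_Ref (c d : Circle) : Ref d ∘ Ref c = Rot (d * c⁻¹) := by
  funext z; simp [Rot, Ref, mul_inv, inv_inv, mul_comm, mul_assoc, mul_left_comm]

lemma Rot_one : Rot 1 = id := by funext z; simp [Rot]

lemma rotMap_eq (α : ℝ) : rotMap α = Rot (Circle.exp α) := rfl
lemma reflMap_eq (α : ℝ) : reflMap α = Ref (Circle.exp α) := rfl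

lemma myexp_zsmul (m : ℤ) (a : ℝ) : Circle.exp (m • a) = Circle.exp a ^ m := by
  simpa using map_zsmul Circle.expHom m a

lemma exp_denseRange : DenseRange Circle.exp :=
  Function.Surjective.denseRange fun z => ⟨Complex.arg z, Circle.exp_arg z⟩

/-- If `T` is an infinite subgroup of `Σ*`, then `(𝕊¹,T)` is minimal:
every orbit is dense in the circle. -/
theorem stmt17 (T : Set (Circle → Circle))
    (hsub : T ⊆ SigmaStar) (hinf : T.Infinite)
    (hid : id ∈ T)
    (hcomp : ∀ f ∈ T, ∀ g ∈ T, g ∘ f ∈ T)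
    (hinv : ∀ f ∈ T, ∃ g ∈ T, f ∘ g = id ∧ g ∘ f = id) :
    ∀ z : Circle, Dense (circOrbit z T) := by
  -- the set of rotation parameters in T
  set S : Set Circle := {c | Rot c ∈ T} with hS
  have hform : ∀ f ∈ T, (∃ c, f = Rot c) ∨ (∃ c, f = Ref c) := by
    intro f hf
    rcases hsub hf with ⟨q, hq⟩ | ⟨q, hq⟩
    · exact Or.inl ⟨_, hq.trans (rotMap_eq _)⟩
    · exact Or.inr ⟨_, hq.trans (reflMap_eq _)⟩
  have hSone : (1 : Circle) ∈ S := by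
    show Rot 1 ∈ T
    rw [Rot_one]; exact hid
  have hSmul : ∀ c ∈ S, ∀ d ∈ S, c * d ∈ S := by
    intro c hc d hd
    have := hcomp (Rot c) hc (Rot d) hd
    rw [Rot_comp] at this
    simpa [hS, mul_comm] using this
  have hSinv : ∀ c ∈ S, c⁻¹ ∈ S := by
    intro c hc
    obtain ⟨g, hg, hfg, hgf⟩ := hinv (Rot c) hc
    have hgeq : g = Rot c⁻¹ := by
      funext w
      have h1 : c * g w = w := congrFun hfg w
      calc g w = c⁻¹ * (c * g w) := (inv_mul_cancel_left c (g w)).symm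
        _ = c⁻¹ * w := by rw [h1]
    rw [hgeq] at hg
    exact hg
  -- S is infinite
  have hRotInf : (T ∩ Set.range Rot).Infinite := by
    have hsplit : T ⊆ (T ∩ Set.range Rot) ∪ (T ∩ Set.range Ref) := by
      intro f hf
      rcases hform f hf with ⟨c, rfl⟩ | ⟨c, rfl⟩
      · exact Or.inl ⟨hf, ⟨c, rfl⟩⟩
      · exact Or.inr ⟨hf, ⟨c, rfl⟩⟩
    rcases (Set.infinite_union.1 (hinf.mono hsplit)) with h | h
    · exact h
    · -- infinitely many reflections: compose with one of them
      obtain ⟨r, hrT, c0, rfl⟩ := h.nonempty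
      have hmap : (fun f => Ref c0 ∘ f) '' (T ∩ Set.range Ref) ⊆ T ∩ Set.range Rot := by
        rintro _ ⟨f, ⟨hfT, c, rfl⟩, rfl⟩
        refine ⟨hcomp _ hfT _ hrT, ⟨c0 * c⁻¹, (Ref_comp_Ref c c0).symm⟩⟩
      have hinj : Set.InjOn (fun f => Ref c0 ∘ f) (T ∩ Set.range Ref) := by
        intro f _ f' _ hff
        funext w
        have h2 : (c0 : Circle) * (f w)⁻¹ = c0 * (f' w)⁻¹ := congrFun hff w
        exact inv_injective (mul_left_cancel h2)
      exact ((h.image hinj).mono hmap)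
  have hSinf : S.Infinite := by
    have h1 : (Rot ⁻¹' (T ∩ Set.range Rot)).Infinite :=
      hRotInf.preimage (by intro f hf; exact hf.2)
    exact h1.mono (by intro c hc; exact hc.1)
  -- parameters form an additive subgroup of ℝ
  let G : AddSubgroup ℝ :=
    { carrier := {α | Circle.exp α ∈ S}
      zero_mem' := by simpa [Circle.exp_zero] using hSone
      add_mem' := by
        intro a b ha hb
        simpa [Circle.exp_add] using hSmul _ ha _ hb
      neg_mem' := by
        intro a ha
        simpa [Circle.exp_neg] using hSinv _ ha }
  have hG2pi : (2 * π) ∈ G := by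
    show Circle.exp (2 * π) ∈ S
    rw [Circle.exp_two_pi]; exact hSone
  have hSG : S = Circle.exp '' (G : Set ℝ) := by
    apply Set.Subset.antisymm
    · intro c hc
      rcases hsub hc with ⟨q, hq⟩ | ⟨q, hq⟩
      · rw [rotMap_eq] at hq
        have hceq : c = Circle.exp (2 * π * q) := Rot_injective hq
        exact ⟨2 * π * q, by show Circle.exp _ ∈ S; rw [← hceq]; exact hc, hceq.symm⟩
      · rw [reflMap_eq] at hq
        exact absurd hq (Rot_ne_Ref _ _)
    · rintro _ ⟨α, hα, rfl⟩
      exact hα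
  -- S is dense
  have hSdense : Dense S := by
    rcases AddSubgroup.dense_or_cyclic G with hdense | ⟨a, ha⟩
    · rw [hSG]
      exact exp_denseRange.dense_image Circle.exp.continuous hdense
    · exfalso
      have hmem : ∀ α ∈ G, ∃ m : ℤ, m • a = α := by
        intro α hα
        rw [ha] at hα
        exact (AddSubgroup.mem_closure_singleton).1 hα
      obtain ⟨n, hn⟩ := hmem _ hG2pi
      have hn0 : n ≠ 0 := by
        rintro rfl
        simp at hn
      set x := Circle.exp a with hx
      have hxn : x ^ n = 1 := by
        rw [← myexp_zsmul, hn, Circle.exp_two_pi]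
      have hfin : IsOfFinOrder x := by
        refine isOfFinOrder_iff_pow_eq_one.2 ⟨n.natAbs, Int.natAbs_pos.2 hn0, ?_⟩
        rcases Int.natAbs_eq n with h | h
        · rw [← zpow_natCast, ← h, hxn]
        · rw [← zpow_natCast, ← neg_neg (n.natAbs : ℤ), ← h, zpow_neg, hxn, inv_one]
      have hsub' : S ⊆ (Subgroup.zpowers x : Set Circle) := by
        intro c hc
        rw [hSG] at hc
        obtain ⟨α, hα, rfl⟩ := hc
        obtain ⟨m, rfl⟩ := hmem _ hα
        rw [myexp_zsmul]
        exact ⟨m, rfl⟩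
      exact hSinf (hfin.finite_zpowers.subset hsub')
  -- conclude
  intro z
  have himg : (fun c => c * z) '' S ⊆ circOrbit z T := by
    rintro _ ⟨c, hc, rfl⟩
    exact ⟨Rot c, hc, rfl⟩
  have hcont : Continuous fun c : Circle => c * z := continuous_id.mul continuous_const
  have hdr : DenseRange fun c : Circle => c * z :=
    Function.Surjective.denseRange fun w => ⟨w * z⁻¹, by simp⟩
  exact ((hdr.dense_image hcont hSdense).mono himg)
end

section
/- Let a monoid S act faithfully on a set X and let (S_α)_{α∈Γ} be a co-decomposition of (X,S), with e ∈ S_α for every α. Then this co-decomposition is strongly pseudo: for all (not necessarily distinct) α_1,…,α_n ∈ Γ and every permutation m of {1,…,n}, the setwise products satisfy S_{α_1} S_{α_2} ⋯ S_{α_n} = S_{α_{m_1}} S_{α_{m_2}} ⋯ S_{α_{m_n}} as subsets of S. -/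
open Pointwise

/-- If a monoid `S` acts faithfully on `X` and `(S_α)_{α∈Γ}` is a
co-decomposition of `(X,S)`, then it is strongly pseudo: for all (not necessarily
distinct) indices `α₁,…,αₙ` the setwise product `S_{α₁} S_{α₂} ⋯ S_{αₙ}` is unchanged
under permuting the factors. -/
theorem stmt19 {M X Γ : Type*} [Monoid M] (act : X → M → X)
    (hone : ∀ x, act x 1 = x)
    (hact : ∀ x s t, act x (s * t) = act (act x s) t)
    (hfaith : ∀ s t : M, (∀ x, act x s = act x t) → s = t)
    (Ssub : Γ → Submonoid M)
    (hdistinct : Function.Injective Ssub)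
    (hgen : Subsemigroup.closure (⋃ α, (Ssub α : Set M)) = ⊤)
    (hmulti : MultiCond act Ssub) :
    ∀ l l' : List Γ, l.Perm l' →
      (l.map (fun α => (Ssub α : Set M))).prod = (l'.map (fun α => (Ssub α : Set M))).prod := by
  -- elementwise commutation for distinct indices
  have hcomm : ∀ α β : Γ, α ≠ β → ∀ s ∈ Ssub α, ∀ t ∈ Ssub β, s * t = t * s := by
    intro α β hne s hs t ht
    apply hfaith
    intro x
    have h := hmulti [(α, s), (β, t)] [(β, t), (α, s)]
      (by simp [hne]) (by simp [hs, ht]) (List.Perm.swap _ _ _) x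
    simpa using h
  -- setwise commutation for all indices
  have hsetcomm : ∀ α β : Γ,
      (Ssub α : Set M) * (Ssub β : Set M) = (Ssub β : Set M) * (Ssub α : Set M) := by
    intro α β
    rcases eq_or_ne α β with rfl | hne
    · rfl
    · ext z
      constructor
      · rintro ⟨a, ha, b, hb, rfl⟩
        exact ⟨b, hb, a, ha, (hcomm α β hne a ha b hb).symm⟩
      · rintro ⟨b, hb, a, ha, rfl⟩
        exact ⟨a, ha, b, hb, (hcomm α β hne a ha b hb)⟩
  intro l l' hperm
  induction hperm with
  | nil => rfl
  | cons x h ih => simp [ih]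
  | swap x y l =>
      simp only [List.map_cons, List.prod_cons, ← mul_assoc]
      rw [hsetcomm]
  | trans h1 h2 ih1 ih2 => exact ih1.trans ih2
end
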